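/- arXiv:2603.27546 — 2 statements merged into one kernel-verified Lean document; each statement's English description precedes it below -/
import Mathlib

section
/- Let x_1, x_2, x_3, x_4 be nonnegative reals with x_2 + x_3 > 0, x_1 + x_4 > 0, x_3 + x_4 > 0 and x_1 + x_2 > 0; set n := x_1 + x_2 + x_3 + x_4, τ := (x_3 + x_4)/n, c := min{τ, 1 − τ}, and let δ > 0. Define V_0 := δ·√(τ(1 − τ)) and V := δ·(√((x_2 + x_3)(x_1 + x_4))/n)·|x_3/(x_2 + x_3) − x_4/(x_1 + x_4)|. Then V_0 − V ≥ (δ/(4 n √(τ(1 − τ)))) · min{ x_2 + x_4, x_1 + x_3, n·c }. -/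
set_option maxHeartbeats 1000000 in
/-- **Population contrast-gap lower bound.**  With `n = x₁+x₂+x₃+x₄`, `τ = (x₃+x₄)/n`,
`c = min{τ, 1−τ}`, `V₀ = δ√(τ(1−τ))` and
`V = δ (√((x₂+x₃)(x₁+x₄))/n) |x₃/(x₂+x₃) − x₄/(x₁+x₄)|`, one has
`V₀ − V ≥ (δ/(4n√(τ(1−τ)))) · min{x₂+x₄, x₁+x₃, n·c}`. -/
theorem population_contrast_gap
    (x1 x2 x3 x4 δ n τ c V0 V : ℝ)
    (h1 : 0 ≤ x1) (h2 : 0 ≤ x2) (h3 : 0 ≤ x3) (h4 : 0 ≤ x4)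
    (h23 : 0 < x2 + x3) (h14 : 0 < x1 + x4) (h34 : 0 < x3 + x4) (h12 : 0 < x1 + x2)
    (hδ : 0 < δ)
    (hn : n = x1 + x2 + x3 + x4)
    (hτ : τ = (x3 + x4) / n)
    (hc : c = min τ (1 - τ))
    (hV0 : V0 = δ * Real.sqrt (τ * (1 - τ)))
    (hV : V = δ * (Real.sqrt ((x2 + x3) * (x1 + x4)) / n) *
        |x3 / (x2 + x3) - x4 / (x1 + x4)|) :
    δ / (4 * n * Real.sqrt (τ * (1 - τ))) * min (min (x2 + x4) (x1 + x3)) (n * c)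
      ≤ V0 - V := by
  have hn0 : 0 < n := by rw [hn]; linarith
  have hnne : n ≠ 0 := ne_of_gt hn0
  set A : ℝ := (x3 + x4) * (x1 + x2) with hA
  set B : ℝ := (x2 + x3) * (x1 + x4) with hB
  set D : ℝ := x1 * x3 - x2 * x4 with hD
  clear_value A B D
  have hA0 : 0 < A := by rw [hA]; exact mul_pos h34 h12
  have hB0 : 0 < B := by rw [hB]; exact mul_pos h23 h14
  set u := Real.sqrt A with hu
  set T := Real.sqrt B with hT
  have hu0 : 0 < u := Real.sqrt_pos.mpr hA0
  have hT0 : 0 < T := Real.sqrt_pos.mpr hB0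
  have huu : u * u = A := Real.mul_self_sqrt hA0.le
  have hTT : T * T = B := Real.mul_self_sqrt hB0.le
  have h1τ : 1 - τ = (x1 + x2) / n := by
    rw [hτ, eq_div_iff hnne, sub_mul, one_mul, div_mul_cancel₀ _ hnne]
    linarith
  have hP : τ * (1 - τ) = A / n ^ 2 := by
    rw [h1τ, hτ, hA, div_mul_div_comm, ← pow_two]
  have hS : Real.sqrt (τ * (1 - τ)) = u / n := by
    rw [hP, show A / n ^ 2 = (u / n) ^ 2 by
      rw [div_pow, hu, Real.sq_sqrt hA0.le],
      Real.sqrt_sq (div_nonneg hu0.le hn0.le)]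
  clear_value u T
  have habs : x3 / (x2 + x3) - x4 / (x1 + x4) = D / B := by
    rw [hD, hB]; field_simp; ring
  set t := |D| with htdef
  have ht0 : 0 ≤ t := abs_nonneg D
  have htD : t * t = D * D := abs_mul_abs_self D
  clear_value t
  set m := min (min (x2 + x4) (x1 + x3)) (n * c) with hm
  have hm1 : m ≤ x2 + x4 := le_trans (min_le_left _ _) (min_le_left _ _)
  have hm2 : m ≤ x1 + x3 := le_trans (min_le_left _ _) (min_le_right _ _)
  have hmc : m ≤ n * c := min_le_right _ _
  clear_value m
  have hnτ : n * τ = x3 + x4 := by rw [hτ]; field_simp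
  have hm3 : m ≤ x3 + x4 := by
    have h' : n * c ≤ n * τ :=
      mul_le_mul_of_nonneg_left (by rw [hc]; exact min_le_left _ _) hn0.le
    rw [hnτ] at h'; linarith
  have hm4 : m ≤ x1 + x2 := by
    have hcle : c ≤ 1 - τ := by rw [hc]; exact min_le_right _ _
    have h' : n * c ≤ n * (1 - τ) := mul_le_mul_of_nonneg_left hcle hn0.le
    have h2' : n * (1 - τ) = x1 + x2 := by rw [h1τ]; field_simp
    rw [h2'] at h'; linarith
  set e3 : ℝ := x1 * x2 * x3 + x1 * x2 * x4 + x1 * x3 * x4 + x2 * x3 * x4 with he3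
  have hid : A * B - D * D = n * e3 := by rw [hA, hB, hD, hn, he3]; ring
  have he30 : 0 ≤ e3 := by rw [he3]; positivity
  have h2e3 : m * B ≤ 2 * e3 := by
    rw [hB, he3]
    linarith [mul_nonneg (mul_nonneg h1 h2) (sub_nonneg.mpr hm3),
      mul_nonneg (mul_nonneg h3 h4) (sub_nonneg.mpr hm4),
      mul_nonneg (mul_nonneg h2 h4) (sub_nonneg.mpr hm2),
      mul_nonneg (mul_nonneg h1 h3) (sub_nonneg.mpr hm1)]
  clear_value e3
  have htle : t ≤ u * T := by
    have hDsq : t * t ≤ (u * T) * (u * T) := by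
      have hprod : (u * T) * (u * T) = A * B := by
        rw [show (u*T)*(u*T) = (u*u)*(T*T) by ring, huu, hTT]
      rw [hprod, htD]
      linarith [hid, mul_nonneg hn0.le he30]
    calc t = Real.sqrt (t * t) := (Real.sqrt_mul_self ht0).symm
      _ ≤ Real.sqrt ((u * T) * (u * T)) := Real.sqrt_le_sqrt hDsq
      _ = u * T := Real.sqrt_mul_self (mul_nonneg hu0.le hT0.le)
  have hfac : (4 * A * T - 4 * u * t - m * n * T) * T
      = 2 * (u * T - t) ^ 2 + n * (2 * e3 - m * B) := by
    linear_combination (4 * A - m * n - 2 * u * u) * hTT - 2 * B * huu - 2 * htD + 2 * hid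
  have key2 : m * n * T + 4 * u * t ≤ 4 * A * T := by
    have hnn : 0 ≤ (4 * A * T - 4 * u * t - m * n * T) * T := by
      rw [hfac]
      have := mul_nonneg hn0.le (by linarith : 0 ≤ 2 * e3 - m * B)
      positivity
    have hX : 0 ≤ 4 * A * T - 4 * u * t - m * n * T :=
      le_of_mul_le_mul_right (by simpa using hnn) hT0
    linarith
  rw [hV0, hV, hS, habs, abs_div, abs_of_pos hB0, ← htdef]
  have hre : δ * (u / n) - δ * (T / n) * (t / B) =
      δ * (4 * A * T - 4 * u * t) / (4 * u * (n * T)) := by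
    rw [← huu, ← hTT]; field_simp
  rw [hre, show 4 * n * (u / n) = 4 * u by field_simp]
  rw [div_mul_eq_mul_div, div_le_div_iff₀ (by positivity) (by positivity)]
  have hmul := mul_le_mul_of_nonneg_left key2
    (le_of_lt (by positivity : (0:ℝ) < δ * (4 * u)))
  linarith [hmul]
end

section
/- Let Ω be a finite set of size N ≥ 2, let I_0 ⊆ Ω with 0 < |I_0| < N, let μ_0, δ ∈ ℝ, and define μ : Ω → ℝ by μ(x) = μ_0 + δ for x ∈ I_0 and μ(x) = μ_0 otherwise. With b(k) := √(k(N − k))/N and μ̄_A := |A|^{−1} Σ_{x∈A} μ(x), for every subset I ⊆ Ω with 0 < |I| < N one has b(|I|)·|μ̄_I − μ̄_{I^c}| ≤ b(|I_0|)·|δ|, where I^c := Ω ∖ I. In particular, the population scan statistic is maximized at I = I_0. -/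
open Finset

/-!
Write `k = |I|` and let `c_I = N·1_I - k` be the centered indicator of `I` on `Ω`. Then
`k(N - k)(μ̄_I - μ̄_{I^c}) = ∑_Ω c_I μ`, and for `μ = μ₀ + δ·1_{I₀}` the constant part is
annihilated, leaving `N ∑_Ω c_I μ = δ ∑_Ω c_I c_{I₀}`. Since `∑_Ω c_I² = N k (N - k)`, the
Cauchy–Schwarz inequality for `c_I` and `c_{I₀}` is exactly the claimed bound.
-/

section

variable {V : Type*} [DecidableEq V]

def centeredIndicator (Ω I : Finset V) (x : V) : ℝ :=
  #Ω * (if x ∈ I then 1 else 0) - #I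

variable {Ω I : Finset V}

lemma sum_centeredIndicator_mul (hI : I ⊆ Ω) (f : V → ℝ) :
    ∑ x ∈ Ω, centeredIndicator Ω I x * f x = #Ω * ∑ x ∈ I, f x - #I * ∑ x ∈ Ω, f x := by
  simp only [centeredIndicator, sub_mul, mul_assoc, sum_sub_distrib, ← mul_sum, ite_mul,
    one_mul, zero_mul, sum_ite_mem, inter_eq_right.2 hI]

lemma sum_centeredIndicator (hI : I ⊆ Ω) : ∑ x ∈ Ω, centeredIndicator Ω I x = 0 := by
  simpa [mul_comm] using sum_centeredIndicator_mul hI 1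

lemma sum_centeredIndicator_sq (hI : I ⊆ Ω) :
    ∑ x ∈ Ω, centeredIndicator Ω I x ^ 2 = #Ω * (#I * (#Ω - #I)) := by
  have hsumI : ∑ x ∈ I, centeredIndicator Ω I x = #I * (#Ω - #I) := by
    rw [sum_congr rfl fun x hx => by rw [centeredIndicator, if_pos hx]]
    simp only [sum_const, nsmul_eq_mul]
    ring
  simp only [sq, sum_centeredIndicator_mul hI, hsumI, sum_centeredIndicator hI]
  ring

lemma abs_sum_centeredIndicator_mul_le {J : Finset V} (hI : I ⊆ Ω) (hJ : J ⊆ Ω) :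
    |∑ x ∈ Ω, centeredIndicator Ω I x * centeredIndicator Ω J x| ≤
      #Ω * (√(#I * (#Ω - #I)) * √(#J * (#Ω - #J))) := by
  calc |∑ x ∈ Ω, centeredIndicator Ω I x * centeredIndicator Ω J x|
      ≤ √(∑ x ∈ Ω, centeredIndicator Ω I x ^ 2) * √(∑ x ∈ Ω, centeredIndicator Ω J x ^ 2) := by
        rw [← Real.sqrt_mul (sum_nonneg fun _ _ => sq_nonneg _)]
        exact Real.abs_le_sqrt (sum_mul_sq_le_sq_mul_sq _ _ _)
    _ = #Ω * (√(#I * (#Ω - #I)) * √(#J * (#Ω - #J))) := by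
        rw [sum_centeredIndicator_sq hI, sum_centeredIndicator_sq hJ,
          Real.sqrt_mul (Nat.cast_nonneg #Ω) (#I * _), Real.sqrt_mul (Nat.cast_nonneg #Ω) (#J * _),
          mul_mul_mul_comm, Real.mul_self_sqrt (Nat.cast_nonneg _)]

lemma sum_centeredIndicator_mul_eq_mean_sub_mean (hI : I ⊆ Ω) (hIpos : 0 < #I)
    (hIlt : #I < #Ω) (f : V → ℝ) :
    ∑ x ∈ Ω, centeredIndicator Ω I x * f x =
      #I * (#Ω - #I) * ((∑ x ∈ I, f x) / #I - (∑ x ∈ Ω \ I, f x) / #(Ω \ I)) := by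
  have hk : (#I : ℝ) ≠ 0 := by exact_mod_cast hIpos.ne'
  have hNk : (#Ω - #I : ℝ) ≠ 0 := sub_ne_zero.2 (by exact_mod_cast hIlt.ne')
  rw [sum_centeredIndicator_mul hI, ← sum_sdiff hI, card_sdiff_of_subset hI,
    Nat.cast_sub hIlt.le]
  field_simp
  ring

lemma sum_centeredIndicator_mul_of_eq_ite (hI : I ⊆ Ω) {J : Finset V} {μ : V → ℝ} {μ0 δ : ℝ}
    (hμ : ∀ x ∈ Ω, μ x = if x ∈ J then μ0 + δ else μ0) :
    #Ω * ∑ x ∈ Ω, centeredIndicator Ω I x * μ x =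
      δ * ∑ x ∈ Ω, centeredIndicator Ω I x * centeredIndicator Ω J x := by
  calc #Ω * ∑ x ∈ Ω, centeredIndicator Ω I x * μ x
      = ∑ x ∈ Ω, ((#Ω * μ0 + δ * #J) * centeredIndicator Ω I x +
          δ * (centeredIndicator Ω I x * centeredIndicator Ω J x)) := by
        rw [mul_sum]
        refine sum_congr rfl fun x hx => ?_
        rw [hμ x hx, centeredIndicator, centeredIndicator]
        split_ifs <;> ring
    _ = δ * ∑ x ∈ Ω, centeredIndicator Ω I x * centeredIndicator Ω J x := by
        rw [sum_add_distrib, ← mul_sum, ← mul_sum, sum_centeredIndicator hI, mul_zero, zero_add]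

end

theorem population_scan_maximized_at_patch_general
    {V : Type*} [DecidableEq V]
    (Ω : Finset V) (N : ℕ) (hN : Ω.card = N)
    (I0 : Finset V) (hI0 : I0 ⊆ Ω)
    (μ0 δ : ℝ) (μ : V → ℝ)
    (hμ : ∀ x ∈ Ω, μ x = if x ∈ I0 then μ0 + δ else μ0)
    (I : Finset V) (hI : I ⊆ Ω) (hIpos : 0 < I.card) (hIlt : I.card < N) :
    Real.sqrt ((I.card : ℝ) * ((N : ℝ) - (I.card : ℝ))) / (N : ℝ) *
        |(∑ x ∈ I, μ x) / (I.card : ℝ) - (∑ x ∈ Ω \ I, μ x) / ((Ω \ I).card : ℝ)| ≤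
      Real.sqrt ((I0.card : ℝ) * ((N : ℝ) - (I0.card : ℝ))) / (N : ℝ) * |δ| := by
  subst hN
  have hk : (0 : ℝ) < #I := by exact_mod_cast hIpos
  have hNk : (0 : ℝ) < #Ω - #I := sub_pos.2 (by exact_mod_cast hIlt)
  set s := √(#I * (#Ω - #I) : ℝ)
  set t := √(#I0 * (#Ω - #I0) : ℝ)
  set d := (∑ x ∈ I, μ x) / #I - (∑ x ∈ Ω \ I, μ x) / #(Ω \ I)
  have hs : 0 < s := Real.sqrt_pos.2 (mul_pos hk hNk)
  have hN : (0 : ℝ) < #Ω := hk.trans (sub_pos.1 hNk)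
  have hscaled : #Ω * (s * s * d) =
      δ * ∑ x ∈ Ω, centeredIndicator Ω I x * centeredIndicator Ω I0 x := by
    rw [Real.mul_self_sqrt (mul_pos hk hNk).le,
      ← sum_centeredIndicator_mul_eq_mean_sub_mean hI hIpos hIlt,
      sum_centeredIndicator_mul_of_eq_ite hI hμ]
  have hbound : #Ω * s * (s * |d|) ≤ #Ω * s * (t * |δ|) := by
    have habs := congrArg abs hscaled
    rw [abs_mul, abs_mul, abs_mul, abs_mul, abs_of_pos hN, abs_of_pos hs] at habs
    calc #Ω * s * (s * |d|)
        = |δ| * |∑ x ∈ Ω, centeredIndicator Ω I x * centeredIndicator Ω I0 x| := by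
          rw [← habs]; ring
      _ ≤ |δ| * (#Ω * (s * t)) :=
          mul_le_mul_of_nonneg_left (abs_sum_centeredIndicator_mul_le hI hI0) (abs_nonneg δ)
      _ = #Ω * s * (t * |δ|) := by ring
  rw [div_mul_eq_mul_div, div_mul_eq_mul_div, div_le_div_iff_of_pos_right hN]
  exact le_of_mul_le_mul_left hbound (mul_pos hN hs)

/-- **The population scan statistic is maximized at the true patch.**  For a mean function
`μ = μ₀ + δ·1_{I₀}` on a finite ground set `Ω` of size `N ≥ 2` and any `I ⊆ Ω` with
`0 < |I| < N`, one has `b(|I|)|μ̄_I − μ̄_{I^c}| ≤ b(|I₀|)|δ|`, where `b(k) = √(k(N−k))/N`. -/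
theorem population_scan_maximized_at_patch
    {V : Type*} [DecidableEq V]
    (Ω : Finset V) (N : ℕ) (hN : Ω.card = N) (h2 : 2 ≤ N)
    (I0 : Finset V) (hI0 : I0 ⊆ Ω) (hI0pos : 0 < I0.card) (hI0lt : I0.card < N)
    (μ0 δ : ℝ) (μ : V → ℝ)
    (hμ : ∀ x ∈ Ω, μ x = if x ∈ I0 then μ0 + δ else μ0)
    (I : Finset V) (hI : I ⊆ Ω) (hIpos : 0 < I.card) (hIlt : I.card < N) :
    Real.sqrt ((I.card : ℝ) * ((N : ℝ) - (I.card : ℝ))) / (N : ℝ) *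
        |(∑ x ∈ I, μ x) / (I.card : ℝ) - (∑ x ∈ Ω \ I, μ x) / ((Ω \ I).card : ℝ)| ≤
      Real.sqrt ((I0.card : ℝ) * ((N : ℝ) - (I0.card : ℝ))) / (N : ℝ) * |δ| :=
  population_scan_maximized_at_patch_general Ω N hN I0 hI0 μ0 δ μ hμ I hI hIpos hIlt
end
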